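/- Let Y be a real-valued random variable on a probability space (Ω, F, P) with E[|Y|] < ∞, let α ∈ (0, 1), set v := VaR_α(Y), and suppose the cumulative distribution function F(z) := P(Y ≤ z) is continuous at z = v. Then P(Y ≥ v) = α and CVaR_α(Y) equals the conditional expectation of Y given the event {Y ≥ v}; that is, CVaR_α(Y) = E[Y·1_{Y ≥ v}] / P(Y ≥ v). -/

import Mathlib

open MeasureTheory

/-- Conditional Value-at-Risk at level `α ∈ (0,1]` of a random cost `Y`:
`CVaR_α(Y) := inf_{s ∈ ℝ} ( s + (1/α)·E[max(Y − s, 0)] )`. -/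
noncomputable def CVaR {Ω : Type*} [MeasurableSpace Ω] (P : Measure Ω) (α : ℝ)
    (Y : Ω → ℝ) : ℝ :=
  ⨅ s : ℝ, (s + (1 / α) * ∫ ω, max (Y ω - s) 0 ∂P)

/-- Value-at-Risk at level `α ∈ (0,1)`: the left-side `(1−α)`-quantile
`VaR_α(Y) := inf{ z ∈ ℝ : P(Y ≤ z) ≥ 1 − α }`. -/
noncomputable def VaR {Ω : Type*} [MeasurableSpace Ω] (P : Measure Ω) (α : ℝ)
    (Y : Ω → ℝ) : ℝ :=
  sInf {z : ℝ | ENNReal.ofReal (1 - α) ≤ P {ω | Y ω ≤ z}}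

/-!
The point `v = VaR_α(Y)` is a limit both of points where the CDF `F` of `Y` is `≥ 1 - α` and of
points where it is `< 1 - α`, so continuity at `v` forces `F(v)` and the left limit `P(Y < v)`
to equal `1 - α`; hence `P(Y ≥ v) = α`. For any level `s`,
`E[(Y - s)⁺] ≥ E[(Y - s)·1_{Y ≥ v}] = E[Y·1_{Y ≥ v}] - s·α`, so the objective defining `CVaR_α`
is bounded below by `E[Y·1_{Y ≥ v}] / α`, and this bound is attained at `s = v` because
`(Y - v)⁺ = (Y - v)·1_{Y ≥ v}`.
-/

open Set Filter Topology ProbabilityTheory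

section Quantile

variable {f : ℝ → ℝ} {p l : ℝ}

lemma nonempty_setOf_le_of_tendsto_atTop (hf : Tendsto f atTop (𝓝 l)) (hpl : p < l) :
    {z | p ≤ f z}.Nonempty :=
  ((hf.eventually (eventually_gt_nhds hpl)).exists).imp fun _ hz ↦ hz.le

lemma bddBelow_setOf_le_of_tendsto_atBot (hf : Tendsto f atBot (𝓝 l)) (hlp : l < p) :
    BddBelow {z | p ≤ f z} := by
  obtain ⟨a, ha⟩ := eventually_atBot.mp (hf.eventually (eventually_lt_nhds hlp))
  exact ⟨a, fun z hz ↦ le_of_not_gt fun hza ↦ (ha z hza.le).not_ge hz⟩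

-- `sInf` is approached both from inside the set and from below by points outside it.
lemma apply_sInf_setOf_le_eq (hne : {z | p ≤ f z}.Nonempty) (hbdd : BddBelow {z | p ≤ f z})
    (hf : ContinuousAt f (sInf {z | p ≤ f z})) : f (sInf {z | p ≤ f z}) = p := by
  set q := sInf {z | p ≤ f z}
  have : (𝓝[{z | p ≤ f z}] q).NeBot :=
    mem_closure_iff_nhdsWithin_neBot.mp (csInf_mem_closure hne hbdd)
  apply le_antisymm
  · refine le_of_tendsto (hf.tendsto.mono_left (nhdsWithin_le_nhds (s := Iio q))) ?_
    filter_upwards [self_mem_nhdsWithin] with z (hz : z < q)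
    exact (lt_of_not_ge (notMem_of_lt_csInf (s := {z | p ≤ f z}) hz hbdd)).le
  · exact ge_of_tendsto (hf.tendsto.mono_left (nhdsWithin_le_nhds (s := {z | p ≤ f z})))
      self_mem_nhdsWithin

lemma measure_Ici_sInf_cdf_eq {μ : Measure ℝ} [IsProbabilityMeasure μ] (hp : p ∈ Ioo 0 1)
    (hcont : ContinuousAt (cdf μ) (sInf {z | p ≤ cdf μ z})) :
    μ (Ici (sInf {z | p ≤ cdf μ z})) = ENNReal.ofReal (1 - p) := by
  have hq := apply_sInf_setOf_le_eq
    (nonempty_setOf_le_of_tendsto_atTop (tendsto_cdf_atTop μ) hp.2)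
    (bddBelow_setOf_le_of_tendsto_atBot (tendsto_cdf_atBot μ) hp.1) hcont
  set q := sInf {z | p ≤ cdf μ z}
  have hleft_tendsto : Tendsto (cdf μ) (𝓝[<] q) (𝓝 p) :=
    hq ▸ hcont.tendsto.mono_left nhdsWithin_le_nhds
  rw [← measure_cdf μ, StieltjesFunction.measure_Ici _ (tendsto_cdf_atTop μ),
    leftLim_eq_of_tendsto hleft_tendsto]

end Quantile

section VaR

variable {Ω : Type*} [MeasurableSpace Ω] {P : Measure Ω} [IsProbabilityMeasure P] {Y : Ω → ℝ}
  {α : ℝ}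

lemma cdf_map_apply (hY : AEMeasurable Y P) (z : ℝ) :
    cdf (P.map Y) z = (P {ω | Y ω ≤ z}).toReal := by
  have := Measure.isProbabilityMeasure_map (μ := P) hY
  rw [cdf_eq_real, measureReal_def, Measure.map_apply_of_aemeasurable hY measurableSet_Iic]
  rfl

lemma VaR_eq_sInf_cdf (hY : AEMeasurable Y P) :
    VaR P α Y = sInf {z | 1 - α ≤ cdf (P.map Y) z} := by
  simp only [VaR, cdf_map_apply hY, ENNReal.ofReal_le_iff_le_toReal (measure_ne_top P _)]

theorem measure_VaR_le_eq (hY : AEMeasurable Y P) (hα : α ∈ Ioo 0 1)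
    (hcont : ContinuousAt (fun z ↦ (P {ω | Y ω ≤ z}).toReal) (VaR P α Y)) :
    P {ω | VaR P α Y ≤ Y ω} = ENNReal.ofReal α := by
  have := Measure.isProbabilityMeasure_map (μ := P) hY
  have hF : (fun z ↦ (P {ω | Y ω ≤ z}).toReal) = cdf (P.map Y) :=
    funext fun z ↦ (cdf_map_apply hY z).symm
  rw [hF, VaR_eq_sInf_cdf hY] at hcont
  have hp : 1 - α ∈ Ioo 0 1 := ⟨by linarith [hα.2], by linarith [hα.1]⟩
  change P (Y ⁻¹' Ici (VaR P α Y)) = _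
  rw [← Measure.map_apply_of_aemeasurable hY measurableSet_Ici, VaR_eq_sInf_cdf hY,
    measure_Ici_sInf_cdf_eq hp hcont, sub_sub_cancel]

end VaR

section CVaR

variable {Ω : Type*} [MeasurableSpace Ω] {P : Measure Ω} [IsFiniteMeasure P] {Y : Ω → ℝ}

lemma integrable_max_sub_zero (hY : Integrable Y P) (s : ℝ) :
    Integrable (fun ω ↦ max (Y ω - s) 0) P :=
  (hY.sub (integrable_const s)).pos_part

lemma setIntegral_sub_const (hY : Integrable Y P) (A : Set Ω) (s : ℝ) :
    ∫ ω in A, (Y ω - s) ∂P = ∫ ω in A, Y ω ∂P - P.real A * s := by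
  rw [integral_sub hY.integrableOn (integrable_const s), setIntegral_const, smul_eq_mul]

lemma setIntegral_sub_le_integral_max_sub_zero (hY : Integrable Y P) (A : Set Ω) (s : ℝ) :
    ∫ ω in A, Y ω ∂P - P.real A * s ≤ ∫ ω, max (Y ω - s) 0 ∂P := by
  rw [← setIntegral_sub_const hY]
  calc ∫ ω in A, (Y ω - s) ∂P
      ≤ ∫ ω in A, max (Y ω - s) 0 ∂P :=
        integral_mono (hY.sub (integrable_const s)).integrableOn
          (integrable_max_sub_zero hY s).integrableOn fun ω ↦ le_max_left _ _
    _ ≤ ∫ ω, max (Y ω - s) 0 ∂P :=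
        setIntegral_le_integral (integrable_max_sub_zero hY s)
          (Eventually.of_forall fun ω ↦ le_max_right _ _)

lemma integral_max_sub_zero_eq_setIntegral (hY : Integrable Y P) (v : ℝ) :
    ∫ ω, max (Y ω - v) 0 ∂P = ∫ ω in {ω | v ≤ Y ω}, Y ω ∂P - P.real {ω | v ≤ Y ω} * v := by
  have hmax : (fun ω ↦ max (Y ω - v) 0) = {ω | v ≤ Y ω}.indicator (fun ω ↦ Y ω - v) := by
    funext ω
    by_cases h : v ≤ Y ω
    · simp [h]
    · simp [h, (not_le.mp h).le]
  have hA : NullMeasurableSet {ω | v ≤ Y ω} P :=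
    hY.aemeasurable.nullMeasurableSet_preimage measurableSet_Ici
  rw [hmax, integral_indicator₀ hA, setIntegral_sub_const hY]

theorem CVaR_eq_setIntegral_div (hY : Integrable Y P) {α v : ℝ} (hα : 0 < α)
    (hv : P.real {ω | v ≤ Y ω} = α) :
    CVaR P α Y = (∫ ω in {ω | v ≤ Y ω}, Y ω ∂P) / α := by
  have hlower : ∀ s, (∫ ω in {ω | v ≤ Y ω}, Y ω ∂P) / α ≤
      s + (1 / α) * ∫ ω, max (Y ω - s) 0 ∂P := fun s ↦ by
    have := setIntegral_sub_le_integral_max_sub_zero hY {ω | v ≤ Y ω} s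
    rw [hv] at this
    rw [div_le_iff₀ hα]
    field_simp
    linarith
  have hattained :
      v + (1 / α) * ∫ ω, max (Y ω - v) 0 ∂P = (∫ ω in {ω | v ≤ Y ω}, Y ω ∂P) / α := by
    rw [integral_max_sub_zero_eq_setIntegral hY, hv]
    field_simp
    ring
  exact le_antisymm (hattained ▸ ciInf_le ⟨_, forall_mem_range.mpr hlower⟩ v) (le_ciInf hlower)

end CVaR

theorem stmt_13_general {Ω : Type*} [MeasurableSpace Ω] (P : Measure Ω) [IsProbabilityMeasure P]
    (Y : Ω → ℝ) (hY : Integrable Y P)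
    (α : ℝ) (hα : α ∈ Set.Ioo (0 : ℝ) 1)
    (hcont : ContinuousAt (fun z : ℝ => (P {ω | Y ω ≤ z}).toReal) (VaR P α Y)) :
    P {ω | VaR P α Y ≤ Y ω} = ENNReal.ofReal α ∧
    CVaR P α Y
      = (∫ ω in {ω | VaR P α Y ≤ Y ω}, Y ω ∂P) / (P {ω | VaR P α Y ≤ Y ω}).toReal := by
  have htail := measure_VaR_le_eq hY.aemeasurable hα hcont
  have htail_real : P.real {ω | VaR P α Y ≤ Y ω} = α := by
    rw [measureReal_def, htail, ENNReal.toReal_ofReal hα.1.le]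
  rw [← measureReal_def, htail_real]
  exact ⟨htail, CVaR_eq_setIntegral_div hY hα.1 htail_real⟩

/-- If the CDF of an integrable random variable `Y` is continuous at `v := VaR_α(Y)` for a
level `α ∈ (0, 1)`, then `P(Y ≥ v) = α` and `CVaR_α(Y)` equals the conditional expectation
of `Y` given `{Y ≥ v}`, i.e., `CVaR_α(Y) = E[Y·1_{Y ≥ v}] / P(Y ≥ v)`. -/
theorem stmt_13 {Ω : Type*} [MeasurableSpace Ω] (P : Measure Ω) [IsProbabilityMeasure P]
    (Y : Ω → ℝ) (hYmeas : Measurable Y) (hY : Integrable Y P)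
    (α : ℝ) (hα : α ∈ Set.Ioo (0 : ℝ) 1)
    (hcont : ContinuousAt (fun z : ℝ => (P {ω | Y ω ≤ z}).toReal) (VaR P α Y)) :
    P {ω | VaR P α Y ≤ Y ω} = ENNReal.ofReal α ∧
    CVaR P α Y
      = (∫ ω in {ω | VaR P α Y ≤ Y ω}, Y ω ∂P) / (P {ω | VaR P α Y ≤ Y ω}).toReal :=
  stmt_13_general P Y hY α hα hcont
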